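/- Let e be a positive integer whose base-3 representation contains exactly one digit equal to 1, located in the units place (i.e., e ≡ 1 mod 3 and all other base-3 digits are 0 or 2). Then p(n,e) ≢ 0 (mod 3) for all positive integers n, where p(n,e) = Σ_{i=0}^{e} 2i² k(n−1, e−i). -/

import Mathlib

/-- The cardinality of the `n`-dimensional Lee ball of radius `e`. -/
def leeK (n e : ℕ) : ℕ := ∑ i ∈ Finset.range (min n e + 1), 2 ^ i * n.choose i * e.choose i

/-- `p(n,e) = Σ_{i=0}^{e} 2 i² k(n−1, e−i)`. -/
def leeP (n e : ℕ) : ℕ := ∑ i ∈ Finset.range (e + 1), 2 * i ^ 2 * leeK (n - 1) (e - i)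

/-!
By Lucas' theorem and Fermat's little theorem, `k(n, e) mod p` is multiplicative in the base-`p`
digits of `n` and `e`. Reflecting `i ↦ e - i` and using `e ≡ 1 (mod 3)` gives
`p(n, e) ≡ 2 Σ_{s ≤ e, s ≢ 1} k(n - 1, s) (mod 3)`, and splitting off the last digits of `n - 1`
and `e` expresses this through `K = k(m, f)` and `U = Σ_{s < f} k(m, s)`, where `f = ⌊e / 3⌋`.
Induction on the digits of `f`, none of which is `1`, shows that `K ≢ 0` and that `U` or `U + K`
vanishes mod 3; in each case `p(n, e) ≢ 0`.
-/

open Finset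

lemma leeK_eq_sum_range {n e N : ℕ} (h : min n e < N) :
    leeK n e = ∑ i ∈ range N, 2 ^ i * n.choose i * e.choose i := by
  refine sum_subset (range_subset_range.mpr h) fun i _ hi => ?_
  rcases le_total n e with hne | hne
  · simp [Nat.choose_eq_zero_of_lt (show n < i by simp at hi; omega)]
  · simp [Nat.choose_eq_zero_of_lt (show e < i by simp at hi; omega)]

lemma sum_range_mul_eq_sum_sum {M : Type*} [AddCommMonoid M] (g : ℕ → M) (p f : ℕ) :
    ∑ s ∈ range (p * f), g s = ∑ t ∈ range f, ∑ c ∈ range p, g (p * t + c) := by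
  induction f with
  | zero => simp
  | succ f ih => rw [Nat.mul_succ, sum_range_add, ih, sum_range_succ]

section DigitSums

variable {R : Type*} [CommSemiring R] {p : ℕ} {g h G : ℕ → R}

lemma sum_range_mul_of_eq_mul (hg : ∀ t c, c < p → g (p * t + c) = h c * G t) (f : ℕ) :
    ∑ s ∈ range (p * f), g s = (∑ c ∈ range p, h c) * ∑ t ∈ range f, G t := by
  rw [sum_range_mul_eq_sum_sum, mul_sum]
  refine sum_congr rfl fun t _ => ?_
  rw [sum_mul]
  exact sum_congr rfl fun c hc => hg t c (mem_range.mp hc)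

lemma sum_range_mul_add_of_eq_mul {r : ℕ} (hr : r ≤ p)
    (hg : ∀ t c, c < p → g (p * t + c) = h c * G t) (f : ℕ) :
    ∑ s ∈ range (p * f + r), g s
      = (∑ c ∈ range p, h c) * ∑ t ∈ range f, G t + (∑ c ∈ range r, h c) * G f := by
  rw [sum_range_add, sum_range_mul_of_eq_mul hg, sum_mul (range r)]
  congr 1
  exact sum_congr rfl fun c hc => hg f c ((mem_range.mp hc).trans_le hr)

end DigitSums

section Lucas

variable (p : ℕ) [Fact p.Prime] {a c : ℕ}

lemma cast_choose_mul_add (ha : a < p) (hc : c < p) (m t : ℕ) :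
    ((p * m + a).choose (p * t + c) : ZMod p) = a.choose c * m.choose t := by
  have hp : 0 < p := (Fact.out : p.Prime).pos
  rw [(ZMod.natCast_eq_natCast_iff _ _ p).mpr Choose.choose_modEq_choose_mod_mul_choose_div_nat,
    Nat.mul_add_mod, Nat.mul_add_mod, Nat.mul_add_div hp, Nat.mul_add_div hp,
    Nat.mod_eq_of_lt ha, Nat.mod_eq_of_lt hc, Nat.div_eq_of_lt ha, Nat.div_eq_of_lt hc,
    Nat.add_zero, Nat.add_zero, Nat.cast_mul]

lemma cast_leeK_mul_add (ha : a < p) (hc : c < p) (m f : ℕ) :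
    (leeK (p * m + a) (p * f + c) : ZMod p) = leeK a c * leeK m f := by
  have hmin : min (p * m + a) (p * f + c) < p * (min m f + 1) := by
    rcases le_total m f with h | h
    · rw [min_eq_left h]; nlinarith [min_le_left (p * m + a) (p * f + c)]
    · rw [min_eq_right h]; nlinarith [min_le_right (p * m + a) (p * f + c)]
  rw [leeK_eq_sum_range hmin, leeK_eq_sum_range (N := p) (by omega),
    leeK_eq_sum_range (N := min m f + 1) (by omega)]
  push_cast
  refine sum_range_mul_of_eq_mul (fun t b hb => ?_) _
  rw [cast_choose_mul_add p ha hb, cast_choose_mul_add p hc hb, pow_add, pow_mul, ZMod.pow_card]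
  ring

end Lucas

section ModThree

/-- Appending a digit `a` to `n` and a digit `r ≠ 1` to `f` preserves the invariant
`K ≠ 0 ∧ (U = 0 ∨ U + K = 0)` for `K = k(n, f)`, `U = Σ_{s < f} k(n, s)`; a check on the
digit table of `k mod 3`. -/
lemma leeK_digit_step {a r : ℕ} (ha : a < 3) (hr : r < 3) (hr1 : r ≠ 1) {K U : ZMod 3}
    (hK : K ≠ 0) (hU : U = 0 ∨ U + K = 0) :
    (leeK a r : ZMod 3) * K ≠ 0 ∧
      ((∑ c ∈ range 3, (leeK a c : ZMod 3)) * U + (∑ c ∈ range r, (leeK a c : ZMod 3)) * K = 0 ∨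
        (∑ c ∈ range 3, (leeK a c : ZMod 3)) * U + (∑ c ∈ range r, (leeK a c : ZMod 3)) * K
          + leeK a r * K = 0) := by
  revert K U
  interval_cases a <;> interval_cases r <;> first | omega | decide

lemma cast_leeK_ne_zero_of_digits_ne_one (f : ℕ) (hf : ∀ j, f / 3 ^ j % 3 ≠ 1) (n : ℕ) :
    (leeK n f : ZMod 3) ≠ 0 ∧
      (∑ s ∈ range f, (leeK n s : ZMod 3) = 0 ∨
        ∑ s ∈ range f, (leeK n s : ZMod 3) + leeK n f = 0) := by
  induction f using Nat.strong_induction_on generalizing n with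
  | _ f ih =>
  rcases Nat.eq_zero_or_pos f with rfl | hf0
  · simp [leeK]
  have hdigits : ∀ j, f / 3 / 3 ^ j % 3 ≠ 1 := fun j => by
    rw [Nat.div_div_eq_div_mul, ← pow_succ']
    exact hf (j + 1)
  obtain ⟨hK, hU⟩ := ih (f / 3) (Nat.div_lt_self hf0 (by norm_num)) hdigits (n / 3)
  have ha : n % 3 < 3 := n.mod_lt (by norm_num)
  have hr : f % 3 < 3 := f.mod_lt (by norm_num)
  rw [← Nat.div_add_mod n 3, ← Nat.div_add_mod f 3, cast_leeK_mul_add 3 ha hr,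
    sum_range_mul_add_of_eq_mul hr.le fun t c hc => cast_leeK_mul_add 3 ha hc (n / 3) t]
  exact leeK_digit_step ha hr (by simpa using hf 0) hK hU

lemma cast_leeP_eq_sum_reflect {R : Type*} [CommRing R] (n e : ℕ) :
    (leeP n e : R) = ∑ s ∈ range (e + 1), 2 * ((e : R) - s) ^ 2 * leeK (n - 1) s := by
  rw [leeP, ← sum_range_reflect]
  push_cast
  refine sum_congr rfl fun s hs => ?_
  have hs : s ≤ e := Nat.lt_succ_iff.mp (mem_range.mp hs)
  rw [Nat.sub_sub_self hs, Nat.cast_sub hs]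

lemma cast_leeP_three_mul_add_one {a : ℕ} (ha : a < 3) (m f : ℕ) :
    (leeP (3 * m + a + 1) (3 * f + 1) : ZMod 3)
      = (∑ c ∈ range 3, 2 * (1 - (c : ZMod 3)) ^ 2 * leeK a c) * ∑ t ∈ range f, (leeK m t : ZMod 3)
        + (∑ c ∈ range 2, 2 * (1 - (c : ZMod 3)) ^ 2 * leeK a c) * leeK m f := by
  rw [cast_leeP_eq_sum_reflect, Nat.add_sub_cancel, show 3 * f + 1 + 1 = 3 * f + 2 from rfl]
  refine sum_range_mul_add_of_eq_mul (r := 2) (by norm_num) (fun t c hc => ?_) f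
  rw [cast_leeK_mul_add 3 ha hc]
  push_cast
  rw [show (3 : ZMod 3) = 0 from rfl]
  ring

lemma leeP_digit_step {a : ℕ} (ha : a < 3) {K U : ZMod 3} (hK : K ≠ 0)
    (hU : U = 0 ∨ U + K = 0) :
    (∑ c ∈ range 3, 2 * (1 - (c : ZMod 3)) ^ 2 * leeK a c) * U
      + (∑ c ∈ range 2, 2 * (1 - (c : ZMod 3)) ^ 2 * leeK a c) * K ≠ 0 := by
  revert K U
  interval_cases a <;> decide

end ModThree

theorem leeP_not_dvd_three_general (e : ℕ) (h0 : e % 3 = 1)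
    (hrest : ∀ j, 1 ≤ j → (e / 3 ^ j) % 3 ≠ 1) :
    ∀ n : ℕ, 0 < n → ¬ (3 ∣ leeP n e) := by
  intro n hn hdvd
  have hdigits : ∀ j, e / 3 / 3 ^ j % 3 ≠ 1 := fun j => by
    rw [Nat.div_div_eq_div_mul, ← pow_succ']
    exact hrest (j + 1) (by omega)
  obtain ⟨hK, hU⟩ := cast_leeK_ne_zero_of_digits_ne_one (e / 3) hdigits ((n - 1) / 3)
  have ha : (n - 1) % 3 < 3 := (n - 1).mod_lt (by norm_num)
  have hn : n = 3 * ((n - 1) / 3) + (n - 1) % 3 + 1 := by omega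
  have he : e = 3 * (e / 3) + 1 := by omega
  apply leeP_digit_step ha hK hU
  rw [← cast_leeP_three_mul_add_one ha, ← hn, ← he]
  exact (ZMod.natCast_eq_zero_iff _ 3).mpr hdvd

theorem leeP_not_dvd_three (e : ℕ) (he : 0 < e) (h0 : e % 3 = 1)
    (hrest : ∀ j, 1 ≤ j → (e / 3 ^ j) % 3 ≠ 1) :
    ∀ n : ℕ, 0 < n → ¬ (3 ∣ leeP n e) :=
  leeP_not_dvd_three_general e h0 hrest
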